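/- Let G ∈ [−1,1] and define the amplitude-damping-with-memory Kraus operators Ã₀ = !![1, 0; 0, G] and Ã₁ = !![0, √(1−G²); 0, 0]. Then for the projectors Π± = (1/2)(𝟙 ± Q(Θ,Φ)), one has Ã₀†Π±Ã₀ + Ã₁†Π±Ã₁ = (1/2)((1 ± (1−G²)cosΘ)𝟙 ± v·σ) with v = (G sinΘ cosΦ, −G sinΘ sinΦ, G² cosΘ); in particular the induced POVM has bias x = (1−G²)cosΘ and sharpness ‖v‖ = |G|√(sin²Θ + G² cos²Θ). -/

import Mathlib

open Matrix

/-- Pauli matrix σ₁. -/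
noncomputable def σ1 : Matrix (Fin 2) (Fin 2) ℂ := !![0, 1; 1, 0]
/-- Pauli matrix σ₂. -/
noncomputable def σ2 : Matrix (Fin 2) (Fin 2) ℂ := !![0, -Complex.I; Complex.I, 0]
/-- Pauli matrix σ₃. -/
noncomputable def σ3 : Matrix (Fin 2) (Fin 2) ℂ := !![1, 0; 0, -1]

/-- The three Pauli matrices, indexed. -/
noncomputable def pauli : Fin 3 → Matrix (Fin 2) (Fin 2) ℂ
  | 0 => σ1
  | 1 => σ2
  | 2 => σ3

/-- `v · σ = v₁σ₁ + v₂σ₂ + v₃σ₃` for `v ∈ ℝ³`. -/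
noncomputable def dotσ (v : Fin 3 → ℝ) : Matrix (Fin 2) (Fin 2) ℂ :=
  ∑ i, (v i : ℂ) • pauli i

/-- Euclidean norm of `v ∈ ℝ³`. -/
noncomputable def enorm3 (v : Fin 3 → ℝ) : ℝ := Real.sqrt (v 0 ^ 2 + v 1 ^ 2 + v 2 ^ 2)

/-- The dichotomic observable `Q(Θ,Φ)`. -/
noncomputable def Qobs (Θ Φ : ℝ) : Matrix (Fin 2) (Fin 2) ℂ :=
  !![(Real.cos Θ : ℂ), Complex.exp (Φ * Complex.I) * (Real.sin Θ : ℂ);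
     Complex.exp (-Φ * Complex.I) * (Real.sin Θ : ℂ), -(Real.cos Θ : ℂ)]

/-- The spectral projectors `Π_s = (1/2)(𝟙 + s·Q(Θ,Φ))`, sign `s = ±1`. -/
noncomputable def projQ (Θ Φ s : ℝ) : Matrix (Fin 2) (Fin 2) ℂ :=
  (1/2 : ℂ) • (1 + (s : ℂ) • Qobs Θ Φ)

/-!
`Q(Θ,Φ) = n·σ` for the unit Bloch vector `n = (sinΘ cosΦ, -sinΘ sinΦ, cosΘ)`. The dual of the
amplitude-damping channel is unital and sends `v·σ` to `(1 - G²) v₃ 𝟙 + (G v₁, G v₂, G² v₃)·σ`: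
the transverse components shrink by `G`, the longitudinal one by `G²`, and the lost weight
reappears as a bias. Linearity applied to `Π± = (𝟙 ± n·σ)/2` gives the POVM.
-/

lemma dotσ_eq (v : Fin 3 → ℝ) :
    dotσ v = !![(v 2 : ℂ), v 0 - v 1 * Complex.I; v 0 + v 1 * Complex.I, -(v 2 : ℂ)] := by
  ext i j
  fin_cases i <;> fin_cases j <;>
    simp [dotσ, pauli, σ1, σ2, σ3, Fin.sum_univ_succ]
  all_goals ring

lemma Qobs_eq_dotσ (Θ Φ : ℝ) :
    Qobs Θ Φ = dotσ ![Real.sin Θ * Real.cos Φ, -(Real.sin Θ * Real.sin Φ), Real.cos Θ] := by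
  have hexp (x : ℝ) : Complex.exp (x * Complex.I) = Real.cos x + Real.sin x * Complex.I := by
    rw [Complex.exp_mul_I, ← Complex.ofReal_cos, ← Complex.ofReal_sin]
  rw [dotσ_eq, Qobs, ← Complex.ofReal_neg Φ, hexp, hexp, Real.cos_neg, Real.sin_neg]
  ext i j
  fin_cases i <;> fin_cases j <;> simp <;> ring

section AmpDampDual

variable (G r : ℝ)

/-- Heisenberg-picture dual of the amplitude-damping channel with memory, whose Kraus operators
are `diag(1, G)` and `r |0⟩⟨1|` with `r = √(1 - G²)`. -/
def ampDampDual : Matrix (Fin 2) (Fin 2) ℂ →ₗ[ℂ] Matrix (Fin 2) (Fin 2) ℂ :=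
  LinearMap.mulLeft ℂ (!![1, 0; 0, (G : ℂ)])ᴴ ∘ₗ LinearMap.mulRight ℂ !![1, 0; 0, (G : ℂ)]
    + LinearMap.mulLeft ℂ (!![0, (r : ℂ); 0, 0])ᴴ ∘ₗ LinearMap.mulRight ℂ !![0, (r : ℂ); 0, 0]

lemma ampDampDual_apply (X : Matrix (Fin 2) (Fin 2) ℂ) :
    ampDampDual G r X = (!![1, 0; 0, (G : ℂ)])ᴴ * X * !![1, 0; 0, (G : ℂ)]
      + (!![0, (r : ℂ); 0, 0])ᴴ * X * !![0, (r : ℂ); 0, 0] := by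
  simp [ampDampDual, mul_assoc]

variable {G r}

lemma ampDampDual_one (hr : r ^ 2 = 1 - G ^ 2) : ampDampDual G r 1 = 1 := by
  have hrC : (r : ℂ) ^ 2 = 1 - (G : ℂ) ^ 2 := by exact_mod_cast hr
  rw [ampDampDual_apply]
  ext i j
  fin_cases i <;> fin_cases j <;> simp [Matrix.mul_apply, Fin.sum_univ_two]
  linear_combination hrC

lemma ampDampDual_dotσ (hr : r ^ 2 = 1 - G ^ 2) (v : Fin 3 → ℝ) :
    ampDampDual G r (dotσ v)
      = (((1 - G ^ 2) * v 2 : ℝ) : ℂ) • 1 + dotσ ![G * v 0, G * v 1, G ^ 2 * v 2] := by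
  have hrC : (r : ℂ) ^ 2 = 1 - (G : ℂ) ^ 2 := by exact_mod_cast hr
  rw [ampDampDual_apply, dotσ_eq, dotσ_eq]
  ext i j
  fin_cases i <;> fin_cases j <;> simp [Matrix.mul_apply, Fin.sum_univ_two] <;> ring_nf
  linear_combination (v 2 : ℂ) * hrC

end AmpDampDual

lemma enorm3_eq_abs_mul_sqrt (G Θ Φ : ℝ) :
    enorm3 ![G * Real.sin Θ * Real.cos Φ, -(G * Real.sin Θ * Real.sin Φ), G ^ 2 * Real.cos Θ]
      = |G| * Real.sqrt (Real.sin Θ ^ 2 + G ^ 2 * Real.cos Θ ^ 2) := by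
  have hsq : (G * Real.sin Θ * Real.cos Φ) ^ 2 + (-(G * Real.sin Θ * Real.sin Φ)) ^ 2
      + (G ^ 2 * Real.cos Θ) ^ 2 = G ^ 2 * (Real.sin Θ ^ 2 + G ^ 2 * Real.cos Θ ^ 2) := by
    linear_combination (G * Real.sin Θ) ^ 2 * Real.sin_sq_add_cos_sq Φ
  rw [enorm3]
  simp only [Matrix.cons_val_zero, Matrix.cons_val_one, Matrix.cons_val_two, Matrix.head_cons,
    Matrix.tail_cons]
  rw [hsq, Real.sqrt_mul (sq_nonneg G), Real.sqrt_sq_eq_abs]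

/-- The conjugate amplitude-damping-with-memory channel maps `Π±` to the POVM
`(1/2)((1 ± (1−G²)cosΘ)𝟙 ± v·σ)` with `v = (G sinΘ cosΦ, −G sinΘ sinΦ, G² cosΘ)`,
of bias `(1−G²)cosΘ` and sharpness `|G|√(sin²Θ + G²cos²Θ)`. -/
theorem stmt12 (G : ℝ) (hG : -1 ≤ G ∧ G ≤ 1) (Θ Φ : ℝ) :
    (∀ s : ℝ, s = 1 ∨ s = -1 →
      (!![1, 0; 0, (G : ℂ)])ᴴ * projQ Θ Φ s * !![1, 0; 0, (G : ℂ)]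
        + (!![0, (Real.sqrt (1 - G ^ 2) : ℂ); 0, 0])ᴴ * projQ Θ Φ s
          * !![0, (Real.sqrt (1 - G ^ 2) : ℂ); 0, 0]
        = (1/2 : ℂ) • ((((1 + s * ((1 - G ^ 2) * Real.cos Θ) : ℝ)) : ℂ) • 1 + (s : ℂ) •
            dotσ ![G * Real.sin Θ * Real.cos Φ, -(G * Real.sin Θ * Real.sin Φ),
                   G ^ 2 * Real.cos Θ])) ∧
    enorm3 ![G * Real.sin Θ * Real.cos Φ, -(G * Real.sin Θ * Real.sin Φ), G ^ 2 * Real.cos Θ]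
      = |G| * Real.sqrt (Real.sin Θ ^ 2 + G ^ 2 * Real.cos Θ ^ 2) := by
  have hr : Real.sqrt (1 - G ^ 2) ^ 2 = 1 - G ^ 2 := Real.sq_sqrt (by nlinarith)
  refine ⟨fun s _ => ?_, enorm3_eq_abs_mul_sqrt G Θ Φ⟩
  have hv : ![G * (Real.sin Θ * Real.cos Φ), G * -(Real.sin Θ * Real.sin Φ), G ^ 2 * Real.cos Θ]
      = ![G * Real.sin Θ * Real.cos Φ, -(G * Real.sin Θ * Real.sin Φ), G ^ 2 * Real.cos Θ] := by
    ext i; fin_cases i <;> simp <;> ring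
  rw [← ampDampDual_apply, projQ, Qobs_eq_dotσ, map_smul, map_add, map_smul, ampDampDual_one hr,
    ampDampDual_dotσ hr]
  simp only [Matrix.cons_val_zero, Matrix.cons_val_one, Matrix.cons_val_two, Matrix.head_cons,
    Matrix.tail_cons, hv]
  push_cast
  module
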